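/- (Continuation Principle) If A ⊆ B ⊆ V(G), then b_g(G|B) ≤ b_g(G|A), where G|S denotes the burning game on G started with all vertices of S already burned. -/
import Mathlib


namespace BurningGame

/-- One spreading phase: all neighbors of burned vertices become burned. -/
noncomputable def spread {V : Type*} [Fintype V] [DecidableEq V] (G : SimpleGraph V) (B : Finset V) : Finset V :=
  ((↑B : Set V) ∪ {v | ∃ u ∈ B, G.Adj u v}).toFinite.toFinset

/-- `EndBy G turn i B k`: starting from burned set `B` at round index `i`
(the player selecting in round `i` is Burner iff `turn i = true`; Burner's selections are
quantified existentially, Staller's universally), Burner can force the game to end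
within `k` further rounds. -/
def EndBy {V : Type*} [Fintype V] [DecidableEq V] (G : SimpleGraph V) (turn : ℕ → Bool) :
    ℕ → Finset V → ℕ → Prop
  | _, B, 0 => B = Finset.univ
  | i, B, k + 1 => B = Finset.univ ∨
      spread G B = Finset.univ ∨
      (if turn i then ∃ v ∉ spread G B, EndBy G turn (i + 1) (insert v (spread G B)) k
       else ∀ v ∉ spread G B, EndBy G turn (i + 1) (insert v (spread G B)) k)

/-- Game burning number relative to a preburned set `S` (Burner starts). -/
noncomputable def bgRel {V : Type*} [Fintype V] [DecidableEq V] (G : SimpleGraph V) (S : Finset V) : ℕ :=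
  sInf {k | EndBy G (fun i => i % 2 == 0) 0 S k}

/-- The game burning number (Burner starts). -/
noncomputable def bg {V : Type*} [Fintype V] [DecidableEq V] (G : SimpleGraph V) : ℕ := bgRel G ∅

/-- The Staller-start game burning number. -/
noncomputable def bg' {V : Type*} [Fintype V] [DecidableEq V] (G : SimpleGraph V) : ℕ :=
  sInf {k | EndBy G (fun i => i % 2 == 1) 0 ∅ k}

/-- The burning number: only Burner plays. -/
noncomputable def burn {V : Type*} [Fintype V] [DecidableEq V] (G : SimpleGraph V) : ℕ :=
  sInf {k | EndBy G (fun _ => true) 0 ∅ k}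

/-- The cooling number: only Staller plays. -/
noncomputable def cool {V : Type*} [Fintype V] [DecidableEq V] (G : SimpleGraph V) : ℕ :=
  sInf {k | EndBy G (fun _ => false) 0 ∅ k}


lemma eq_univ_of_subset' {V : Type*} [Fintype V] [DecidableEq V] {A B : Finset V}
    (h : A ⊆ B) (hA : A = Finset.univ) : B = Finset.univ :=
  Finset.univ_subset_iff.1 (hA ▸ h)

lemma mem_spread {V : Type*} [Fintype V] [DecidableEq V] (G : SimpleGraph V) (B : Finset V)
    (v : V) : v ∈ spread G B ↔ v ∈ B ∨ ∃ u ∈ B, G.Adj u v := by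
  simp [spread]

lemma subset_spread {V : Type*} [Fintype V] [DecidableEq V] (G : SimpleGraph V) (B : Finset V) :
    B ⊆ spread G B := fun v hv => (mem_spread G B v).2 (Or.inl hv)

lemma spread_mono {V : Type*} [Fintype V] [DecidableEq V] (G : SimpleGraph V) {A B : Finset V}
    (h : A ⊆ B) : spread G A ⊆ spread G B := by
  intro v hv
  rw [mem_spread] at hv ⊢
  rcases hv with hv | ⟨u, hu, hadj⟩
  · exact Or.inl (h hv)
  · exact Or.inr ⟨u, h hu, hadj⟩

lemma endBy_mono_set {V : Type*} [Fintype V] [DecidableEq V] (G : SimpleGraph V)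
    (turn : ℕ → Bool) : ∀ k i (A B : Finset V), A ⊆ B → EndBy G turn i A k →
      EndBy G turn i B k := by
  intro k
  induction k with
  | zero =>
    intro i A B hAB h
    exact eq_univ_of_subset' hAB (by simpa [EndBy] using h)
  | succ k ih =>
    intro i A B hAB h
    rcases h with hA | hsA | h
    · exact Or.inl (eq_univ_of_subset' hAB hA)
    · exact Or.inr (Or.inl (eq_univ_of_subset' (spread_mono G hAB) hsA))
    · by_cases hsB : spread G B = Finset.univ
      · exact Or.inr (Or.inl hsB)
      refine Or.inr (Or.inr ?_)
      cases hturn : turn i with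
      | true =>
        rw [hturn] at h; simp only [if_true] at h ⊢
        obtain ⟨v, hv, hend⟩ := h
        by_cases hvB : v ∈ spread G B
        · obtain ⟨w, hw⟩ : ∃ w, w ∉ spread G B := by
            by_contra hc
            push_neg at hc
            exact hsB (Finset.eq_univ_iff_forall.2 hc)
          refine ⟨w, hw, ih _ _ _ ?_ hend⟩
          intro x hx
          rcases Finset.mem_insert.1 hx with rfl | hx
          · exact Finset.mem_insert_of_mem hvB
          · exact Finset.mem_insert_of_mem (spread_mono G hAB hx)
        · refine ⟨v, hvB, ih _ _ _ ?_ hend⟩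
          exact Finset.insert_subset_insert _ (spread_mono G hAB)
      | false =>
        rw [hturn] at h; simp only [if_false, Bool.false_eq_true] at h ⊢
        intro w hw
        have hwA : w ∉ spread G A := fun hc => hw (spread_mono G hAB hc)
        exact ih _ _ _ (Finset.insert_subset_insert _ (spread_mono G hAB)) (h w hwA)

lemma endBy_mono_k {V : Type*} [Fintype V] [DecidableEq V] (G : SimpleGraph V)
    (turn : ℕ → Bool) : ∀ k i (B : Finset V), EndBy G turn i B k →
      EndBy G turn i B (k + 1) := by
  intro k
  induction k with
  | zero =>
    intro i B h
    exact Or.inl h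
  | succ k ih =>
    intro i B h
    rcases h with hB | hsB | h
    · exact Or.inl hB
    · exact Or.inr (Or.inl hsB)
    refine Or.inr (Or.inr ?_)
    cases hturn : turn i with
    | true =>
      rw [hturn] at h; simp only [if_true] at h ⊢
      obtain ⟨v, hv, hend⟩ := h
      exact ⟨v, hv, ih _ _ hend⟩
    | false =>
      rw [hturn] at h; simp only [if_false, Bool.false_eq_true] at h ⊢
      exact fun v hv => ih _ _ (h v hv)

lemma endBy_of_card {V : Type*} [Fintype V] [DecidableEq V] (G : SimpleGraph V)
    (turn : ℕ → Bool) : ∀ n i (B : Finset V), Bᶜ.card ≤ n → EndBy G turn i B n := by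
  intro n
  induction n with
  | zero =>
    intro i B h
    have : Bᶜ = ∅ := Finset.card_eq_zero.1 (Nat.le_zero.1 h)
    have : B = Finset.univ := by
      rwa [Finset.compl_eq_empty_iff] at this
    exact this
  | succ n ih =>
    intro i B h
    by_cases hsB : spread G B = Finset.univ
    · exact Or.inr (Or.inl hsB)
    refine Or.inr (Or.inr ?_)
    have key : ∀ v ∉ spread G B, EndBy G turn (i + 1) (insert v (spread G B)) n := by
      intro v hv
      refine ih _ _ ?_
      have h1 : (insert v (spread G B))ᶜ ⊂ Bᶜ := by
        constructor
        · intro x hx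
          simp only [Finset.mem_compl, Finset.mem_insert, not_or] at hx ⊢
          exact fun hxB => hx.2 (subset_spread G B hxB)
        · intro hsub
          have hvB : v ∈ Bᶜ := by
            simp only [Finset.mem_compl]
            exact fun hc => hv (subset_spread G B hc)
          have := hsub hvB
          simp at this
      have := Finset.card_lt_card h1
      omega
    cases hturn : turn i with
    | true =>
      simp only [if_true]
      obtain ⟨w, hw⟩ : ∃ w, w ∉ spread G B := by
        by_contra hc
        push_neg at hc
        exact hsB (Finset.eq_univ_iff_forall.2 hc)
      exact ⟨w, hw, key w hw⟩
    | false =>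
      simp only [if_false, Bool.false_eq_true]
      exact key

theorem stmt3 {V : Type*} [Fintype V] [DecidableEq V] (G : SimpleGraph V)
    (A B : Finset V) (hAB : A ⊆ B) :
    bgRel G B ≤ bgRel G A := by
  have hne : {k | EndBy G (fun i => i % 2 == 0) 0 A k}.Nonempty :=
    ⟨Aᶜ.card, endBy_of_card G _ _ _ _ le_rfl⟩
  have hmem := Nat.sInf_mem hne
  exact Nat.sInf_le (endBy_mono_set G _ _ _ _ _ hAB hmem)

end BurningGame
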